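/- arXiv:2505.07179 — 5 statements merged into one kernel-verified Lean document; each statement's English description precedes it below -/
import Mathlib

section
/- For all spins S_X, S_Y, S_Z ∈ {−1, 1}, letting φ_j = π(1 − S_j)/2 for j ∈ {X, Y, Z}, the complex clause energy Z_1(φ_X, φ_Y, φ_Z) is real and equals H_1(S) = 1 + S_X S_Y + S_X S_Z + S_Y S_Z − (S_X + S_Y + S_Z) − S_X S_Y S_Z. Moreover H_1(S) = 0 if S_X = 1 or S_Y = 1 or S_Z = 1 (i.e., the clause X ∨ Y ∨ Z is satisfied, with S = +1 meaning TRUE), and H_1(S) = 8 otherwise. -/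
/-!
A spin `S = ±1` and its binary phase `φ = π(1 - S)/2` are related by `e^{iφ} = S`. Writing `Z_1`
through `u = e^{iφ_X}`, `v = e^{iφ_Y}`, `w = e^{iφ_Z}` and using `S⁻¹ = S` for spins, `Z_1` becomes
`1 + S_X S_Y + S_X S_Z + S_Z S_Y - S_X - S_Y - S_Z - S_X S_Y S_Z = H_1(S)`. Finally
`H_1(S) = (1 - S_X)(1 - S_Y)(1 - S_Z)`, which vanishes as soon as one spin is `+1` and is `2³`
when all three are `-1`.
-/

/-- Complex clause energy Z_1 for the corresponding 3-SAT clause type. -/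
noncomputable def Zclause1 (x y z : ℝ) : ℂ :=
  1
    + Complex.exp (Complex.I * ((x : ℂ) - (y : ℂ)))
    + Complex.exp (Complex.I * ((x : ℂ) - (z : ℂ)))
    + Complex.exp (Complex.I * ((z : ℂ) - (y : ℂ)))
    - Complex.exp (Complex.I * (x : ℂ))
    - Complex.exp (Complex.I * (y : ℂ))
    - Complex.exp (Complex.I * (z : ℂ))
    - Complex.exp (Complex.I * ((x : ℂ) - (y : ℂ) + (z : ℂ)))

/-- Ising clause energy H_1. -/
noncomputable def Hclause1 (SX SY SZ : ℝ) : ℝ :=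
  1 + SX*SY + SX*SZ + SY*SZ - (SX + SY + SZ) - SX*SY*SZ

open Complex

theorem Zclause1_eq_exp (x y z : ℝ) :
    Zclause1 x y z =
      1 + exp (I * x) * (exp (I * y))⁻¹ + exp (I * x) * (exp (I * z))⁻¹
        + exp (I * z) * (exp (I * y))⁻¹ - exp (I * x) - exp (I * y) - exp (I * z)
        - exp (I * x) * (exp (I * y))⁻¹ * exp (I * z) := by
  simp only [Zclause1, mul_add, mul_sub, exp_add, exp_sub, div_eq_mul_inv]

theorem Hclause1_eq_prod (SX SY SZ : ℝ) :
    Hclause1 SX SY SZ = (1 - SX) * (1 - SY) * (1 - SZ) := by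
  unfold Hclause1
  ring

theorem exp_I_mul_binaryPhase {S : ℝ} (hS : S = 1 ∨ S = -1) :
    exp (I * ↑(Real.pi * (1 - S) / 2)) = S := by
  rcases hS with rfl | rfl
  · simp
  · norm_num [mul_comm I, exp_pi_mul_I]

theorem inv_ofReal_spin {S : ℝ} (hS : S = 1 ∨ S = -1) : (S : ℂ)⁻¹ = S := by
  rcases hS with rfl | rfl <;> norm_num

/-- for binary spins, with binary phases φ_j = π(1-S_j)/2, the complex
clause energy Z_1 is real and equals H_1(S); moreover H_1(S) = 0 iff the clause is
satisfied (S = +1 meaning TRUE), and H_1(S) = 8 otherwise. -/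
theorem clause1_energy_eq_ising (SX SY SZ : ℝ)
    (hX : SX = 1 ∨ SX = -1) (hY : SY = 1 ∨ SY = -1) (hZ : SZ = 1 ∨ SZ = -1) :
    Zclause1 (Real.pi * (1 - SX) / 2) (Real.pi * (1 - SY) / 2) (Real.pi * (1 - SZ) / 2)
        = ((Hclause1 SX SY SZ : ℝ) : ℂ) ∧
      ((SX = 1 ∨ SY = 1 ∨ SZ = 1) → Hclause1 SX SY SZ = 0) ∧
      (¬ (SX = 1 ∨ SY = 1 ∨ SZ = 1) → Hclause1 SX SY SZ = 8) := by
  refine ⟨?_, fun hsat => ?_, fun hunsat => ?_⟩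
  · rw [Zclause1_eq_exp, exp_I_mul_binaryPhase hX, exp_I_mul_binaryPhase hY,
      exp_I_mul_binaryPhase hZ, inv_ofReal_spin hY, inv_ofReal_spin hZ, Hclause1]
    push_cast
    ring
  · rw [Hclause1_eq_prod]
    rcases hsat with rfl | rfl | rfl <;> ring
  · obtain ⟨hX1, hY1, hZ1⟩ : SX ≠ 1 ∧ SY ≠ 1 ∧ SZ ≠ 1 := by simpa only [not_or] using hunsat
    rw [Hclause1_eq_prod, hX.resolve_left hX1, hY.resolve_left hY1, hZ.resolve_left hZ1]
    norm_num
end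

section
/- Suppose the 3-SAT instance is satisfiable. If (φ*, φ_λ*) ∈ ℝ^N × ℝ^M is a saddle point of the total Lagrange function L_T, i.e., L_T(φ*, φ_λ) ≤ L_T(φ*, φ_λ*) ≤ L_T(φ, φ_λ*) for all φ ∈ ℝ^N and all φ_λ ∈ ℝ^M, then all the constraints are satisfied at φ*: Z_m(φ*) = 0 for every clause m ∈ {1, …, M}. -/
/-- Complex clause energy Z_2 for the clause ¬X ∨ Y ∨ Z (one negated literal). -/
noncomputable def Zclause2 (x y z : ℝ) : ℂ :=
  1
    - Complex.exp (Complex.I * ((x : ℂ) - (y : ℂ)))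
    - Complex.exp (Complex.I * ((x : ℂ) - (z : ℂ)))
    + Complex.exp (Complex.I * ((z : ℂ) - (y : ℂ)))
    + Complex.exp (Complex.I * (x : ℂ))
    - Complex.exp (Complex.I * (y : ℂ))
    - Complex.exp (Complex.I * (z : ℂ))
    + Complex.exp (Complex.I * ((x : ℂ) - (y : ℂ) + (z : ℂ)))

/-- Complex clause energy Z_3 for the clause ¬X ∨ ¬Y ∨ Z (two negated literals). -/
noncomputable def Zclause3 (x y z : ℝ) : ℂ :=
  1
    + Complex.exp (Complex.I * ((x : ℂ) - (y : ℂ)))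
    - Complex.exp (Complex.I * ((x : ℂ) - (z : ℂ)))
    - Complex.exp (Complex.I * ((z : ℂ) - (y : ℂ)))
    + Complex.exp (Complex.I * (x : ℂ))
    + Complex.exp (Complex.I * (y : ℂ))
    - Complex.exp (Complex.I * (z : ℂ))
    - Complex.exp (Complex.I * ((x : ℂ) - (y : ℂ) + (z : ℂ)))

/-- Complex clause energy Z_4 for the clause ¬X ∨ ¬Y ∨ ¬Z (three negated literals). -/
noncomputable def Zclause4 (x y z : ℝ) : ℂ :=
  1
    + Complex.exp (Complex.I * ((x : ℂ) - (y : ℂ)))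
    + Complex.exp (Complex.I * ((x : ℂ) - (z : ℂ)))
    + Complex.exp (Complex.I * ((z : ℂ) - (y : ℂ)))
    + Complex.exp (Complex.I * (x : ℂ))
    + Complex.exp (Complex.I * (y : ℂ))
    + Complex.exp (Complex.I * (z : ℂ))
    + Complex.exp (Complex.I * ((x : ℂ) - (y : ℂ) + (z : ℂ)))

/-- The clause-type energy Z_t, indexed by the number of negated literals:
`ZclauseType 0 = Z_1`, `ZclauseType 1 = Z_2`, `ZclauseType 2 = Z_3`, `ZclauseType 3 = Z_4`. -/
noncomputable def ZclauseType (t : Fin 4) : ℝ → ℝ → ℝ → ℂ :=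
  ![Zclause1, Zclause2, Zclause3, Zclause4] t

/-- A 3-SAT clause on `N` variables: three literals on three distinct variables,
listed with the negated literals first, so that `var k` is the variable of the k-th
literal, which is negated iff `k < negCount`, and `negCount` is the number of negated
literals of the clause. -/
structure Clause3 (N : ℕ) where
  var : Fin 3 → Fin N
  negCount : Fin 4
  distinct : Function.Injective var

/-- The clause energy Z_m(φ) of a clause: the formula Z_t for the type t matching its
number of negated literals (negated literals coming first), applied to the phases of
its three variables. -/
noncomputable def Zm {N : ℕ} (c : Clause3 N) (phi : Fin N → ℝ) : ℂ :=
  ZclauseType c.negCount (phi (c.var 0)) (phi (c.var 1)) (phi (c.var 2))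

/-- The total Lagrange function
L_T(φ, φ_λ) = ∑_m [cos φ_λ^m · Re Z_m(φ) + sin φ_λ^m · Im Z_m(φ)]. -/
noncomputable def LagT {N M : ℕ} (C : Fin M → Clause3 N) (phi : Fin N → ℝ)
    (lam : Fin M → ℝ) : ℝ :=
  ∑ m : Fin M, (Real.cos (lam m) * (Zm (C m) phi).re + Real.sin (lam m) * (Zm (C m) phi).im)

/-- An assignment S ∈ {−1,1}^N satisfies a clause if at least one of its literals is
true: S_v = −1 for a negated literal on variable v, S_v = 1 for a positive one. -/
def ClauseSat {N : ℕ} (c : Clause3 N) (S : Fin N → ℝ) : Prop :=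
  ∃ k : Fin 3, S (c.var k) = (if (k : ℕ) < (c.negCount : ℕ) then -1 else 1)

/-- A 3-SAT instance is satisfiable if some assignment S ∈ {−1,1}^N satisfies all clauses. -/
def Satisfiable {N M : ℕ} (C : Fin M → Clause3 N) : Prop :=
  ∃ S : Fin N → ℝ, (∀ j, S j = 1 ∨ S j = -1) ∧ ∀ m : Fin M, ClauseSat (C m) S

lemma expI_eq (s : ℝ) (hs : s = 1 ∨ s = -1) :
    Complex.exp (Complex.I * Complex.ofReal (if s = 1 then (0:ℝ) else Real.pi)) = (s : ℂ) := by
  rcases hs with h | h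
  · simp [h]
  · have hne : s ≠ 1 := by rw [h]; norm_num
    rw [if_neg hne, h, mul_comm, Complex.exp_pi_mul_I]
    norm_num

lemma Zclause_factor (t : Fin 4) (x y z : ℝ) (a b c : ℂ)
    (ha : Complex.exp (Complex.I * (x : ℂ)) = a)
    (hb : Complex.exp (Complex.I * (y : ℂ)) = b)
    (hc : Complex.exp (Complex.I * (z : ℂ)) = c)
    (hb2 : b * b = 1) (hc2 : c * c = 1) :
    ZclauseType t x y z =
      (1 + (if 0 < (t : ℕ) then 1 else -1) * a) *
      ((1 + (if 1 < (t : ℕ) then 1 else -1) * b) *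
       (1 + (if 2 < (t : ℕ) then 1 else -1) * c)) := by
  have e1 : Complex.exp (Complex.I * ((x : ℂ) - y)) = a * b := by
    have h : Complex.exp (Complex.I * ((x : ℂ) - y)) * b = a := by
      rw [← hb, ← ha, ← Complex.exp_add]; congr 1; ring
    calc Complex.exp (Complex.I * ((x : ℂ) - y))
        = Complex.exp (Complex.I * ((x : ℂ) - y)) * (b * b) := by rw [hb2, mul_one]
      _ = a * b := by rw [← mul_assoc, h]
  have e2 : Complex.exp (Complex.I * ((z : ℂ) - y)) = c * b := by
    have h : Complex.exp (Complex.I * ((z : ℂ) - y)) * b = c := by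
      rw [← hb, ← hc, ← Complex.exp_add]; congr 1; ring
    calc Complex.exp (Complex.I * ((z : ℂ) - y))
        = Complex.exp (Complex.I * ((z : ℂ) - y)) * (b * b) := by rw [hb2, mul_one]
      _ = c * b := by rw [← mul_assoc, h]
  have e4 : Complex.exp (Complex.I * ((x : ℂ) - z)) = a * c := by
    have h : Complex.exp (Complex.I * ((x : ℂ) - z)) * c = a := by
      rw [← hc, ← ha, ← Complex.exp_add]; congr 1; ring
    calc Complex.exp (Complex.I * ((x : ℂ) - z))
        = Complex.exp (Complex.I * ((x : ℂ) - z)) * (c * c) := by rw [hc2, mul_one]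
      _ = a * c := by rw [← mul_assoc, h]
  have e3 : Complex.exp (Complex.I * ((x : ℂ) - y + z)) = a * b * c := by
    have h : Complex.exp (Complex.I * ((x : ℂ) - y + z)) * b = a * c := by
      rw [← hb, ← ha, ← hc, ← Complex.exp_add, ← Complex.exp_add]; congr 1; ring
    calc Complex.exp (Complex.I * ((x : ℂ) - y + z))
        = Complex.exp (Complex.I * ((x : ℂ) - y + z)) * (b * b) := by rw [hb2, mul_one]
      _ = a * c * b := by rw [← mul_assoc, h]
      _ = a * b * c := by ring
  fin_cases t
  · show Zclause1 x y z = _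
    rw [Zclause1, e1, e4, e2, e3, ha, hb, hc]; norm_num; ring
  · show Zclause2 x y z = _
    rw [Zclause2, e1, e4, e2, e3, ha, hb, hc]; norm_num; ring
  · show Zclause3 x y z = _
    rw [Zclause3, e1, e4, e2, e3, ha, hb, hc]; norm_num; ring
  · show Zclause4 x y z = _
    rw [Zclause4, e1, e4, e2, e3, ha, hb, hc]; norm_num; ring

lemma term_le_abs (z : ℂ) (l : ℝ) :
    Real.cos l * z.re + Real.sin l * z.im ≤ ‖z‖ := by
  have h1 : (‖z‖) ^ 2 = z.re ^ 2 + z.im ^ 2 := by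
    rw [Complex.sq_norm, Complex.normSq_apply]; ring
  nlinarith [Real.sin_sq_add_cos_sq l, sq_nonneg (Real.cos l * z.im - Real.sin l * z.re),
    norm_nonneg z, sq_nonneg (‖z‖ - (Real.cos l * z.re + Real.sin l * z.im)),
    sq_nonneg (‖z‖ + (Real.cos l * z.re + Real.sin l * z.im))]

lemma term_arg_eq_abs (z : ℂ) :
    Real.cos z.arg * z.re + Real.sin z.arg * z.im = ‖z‖ := by
  by_cases hz : z = 0
  · simp [hz]
  · have habs : ‖z‖ ≠ 0 := by simpa using hz
    have h1 : (‖z‖) ^ 2 = z.re ^ 2 + z.im ^ 2 := by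
      rw [Complex.sq_norm, Complex.normSq_apply]; ring
    rw [Complex.cos_arg hz, Complex.sin_arg]
    field_simp
    nlinarith [h1]

/-- for a satisfiable instance, any saddle point (φ*, φ_λ*) of the total
Lagrange function L_T satisfies all the constraints: Z_m(φ*) = 0 for every clause m. -/
theorem LagT_saddle_point_satisfies_constraints (N M : ℕ) (C : Fin M → Clause3 N)
    (hsat : Satisfiable C) (phis : Fin N → ℝ) (lams : Fin M → ℝ)
    (hsaddle₁ : ∀ lam : Fin M → ℝ, LagT C phis lam ≤ LagT C phis lams)
    (hsaddle₂ : ∀ phi : Fin N → ℝ, LagT C phis lams ≤ LagT C phi lams) :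
    ∀ m : Fin M, Zm (C m) phis = 0 := by
  classical
  obtain ⟨S, hS, hsatm⟩ := hsat
  set phihat : Fin N → ℝ := fun j => if S j = 1 then 0 else Real.pi with hph
  have hexp : ∀ j, Complex.exp (Complex.I * (phihat j : ℂ)) = (S j : ℂ) := fun j =>
    expI_eq (S j) (hS j)
  have hsq : ∀ j, (S j : ℂ) * (S j : ℂ) = 1 := by
    intro j; rcases hS j with h | h <;> rw [h] <;> norm_num
  -- Z_m(phihat) = 0 for every clause
  have hZ0 : ∀ m, Zm (C m) phihat = 0 := by
    intro m
    obtain ⟨k, hk⟩ := hsatm m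
    unfold Zm
    rw [Zclause_factor ((C m).negCount) _ _ _ _ _ _ (hexp ((C m).var 0))
      (hexp ((C m).var 1)) (hexp ((C m).var 2)) (hsq _) (hsq _)]
    fin_cases k
    · have hk' : S ((C m).var 0) = if (0:ℕ) < ((C m).negCount : ℕ) then -1 else 1 := hk
      by_cases h : (0:ℕ) < ((C m).negCount : ℕ)
      · rw [if_pos h] at hk'; rw [if_pos h, hk']; norm_num
      · rw [if_neg h] at hk'; rw [if_neg h, hk']; norm_num
    · have hk' : S ((C m).var 1) = if (1:ℕ) < ((C m).negCount : ℕ) then -1 else 1 := hk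
      by_cases h : (1:ℕ) < ((C m).negCount : ℕ)
      · rw [if_pos h] at hk'; rw [if_pos h, hk']; norm_num
      · rw [if_neg h] at hk'; rw [if_neg h, hk']; norm_num
    · have hk' : S ((C m).var 2) = if (2:ℕ) < ((C m).negCount : ℕ) then -1 else 1 := hk
      by_cases h : (2:ℕ) < ((C m).negCount : ℕ)
      · rw [if_pos h] at hk'; rw [if_pos h, hk']; norm_num
      · rw [if_neg h] at hk'; rw [if_neg h, hk']; norm_num
  have hL0 : LagT C phihat lams = 0 := by
    unfold LagT
    apply Finset.sum_eq_zero
    intro m _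
    rw [hZ0 m]
    simp
  have hle0 : LagT C phis lams ≤ 0 := by
    have := hsaddle₂ phihat
    rw [hL0] at this
    exact this
  -- each term at the saddle equals the modulus
  have key : ∀ m : Fin M, (‖Zm (C m) phis‖ : ℝ) ≤
      Real.cos (lams m) * (Zm (C m) phis).re + Real.sin (lams m) * (Zm (C m) phis).im := by
    intro m
    set F : Fin M → ℝ → ℝ := fun j l =>
      Real.cos l * (Zm (C j) phis).re + Real.sin l * (Zm (C j) phis).im with hF
    have h := hsaddle₁ (Function.update lams m (Zm (C m) phis).arg)
    have hfun : (fun m' : Fin M => F m' (Function.update lams m (Zm (C m) phis).arg m'))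
        = Function.update (fun m' => F m' (lams m')) m (F m (Zm (C m) phis).arg) := by
      funext j
      rcases eq_or_ne j m with hj | hj
      · subst hj; simp
      · simp [Function.update_of_ne hj]
    have hsum1 : LagT C phis (Function.update lams m (Zm (C m) phis).arg)
        = F m (Zm (C m) phis).arg + ∑ j ∈ Finset.univ \ {m}, F j (lams j) := by
      unfold LagT
      calc (∑ m' : Fin M, (Real.cos (Function.update lams m (Zm (C m) phis).arg m') *
              (Zm (C m') phis).re + Real.sin (Function.update lams m (Zm (C m) phis).arg m') *
              (Zm (C m') phis).im))
          = ∑ m' : Fin M, Function.update (fun m'' => F m'' (lams m'')) m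
              (F m (Zm (C m) phis).arg) m' := by
            rw [← hfun]
        _ = _ := Finset.sum_update_of_mem (Finset.mem_univ m) _ _
    have hsum2 : LagT C phis lams
        = F m (lams m) + ∑ j ∈ Finset.univ \ {m}, F j (lams j) := by
      unfold LagT
      rw [← Finset.sum_update_of_mem (Finset.mem_univ m)]
      apply Finset.sum_congr rfl
      intro j _
      rcases eq_or_ne j m with hj | hj
      · subst hj; simp; rfl
      · simp [Function.update_of_ne hj]; rfl
    rw [hsum1, hsum2] at h
    have h2 : F m (Zm (C m) phis).arg ≤ F m (lams m) := by linarith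
    rw [hF] at h2
    simp only at h2
    calc (‖Zm (C m) phis‖ : ℝ)
        = Real.cos (Zm (C m) phis).arg * (Zm (C m) phis).re +
          Real.sin (Zm (C m) phis).arg * (Zm (C m) phis).im := (term_arg_eq_abs _).symm
      _ ≤ _ := h2
  have hsumabs : ∑ m : Fin M, ‖Zm (C m) phis‖ ≤ 0 := by
    calc ∑ m : Fin M, ‖Zm (C m) phis‖
        ≤ ∑ m : Fin M, (Real.cos (lams m) * (Zm (C m) phis).re +
            Real.sin (lams m) * (Zm (C m) phis).im) :=
          Finset.sum_le_sum fun m _ => key m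
      _ = LagT C phis lams := rfl
      _ ≤ 0 := hle0
  have hsumzero : ∑ m : Fin M, ‖Zm (C m) phis‖ = 0 :=
    le_antisymm hsumabs (Finset.sum_nonneg fun m _ => norm_nonneg _)
  intro m
  have := (Finset.sum_eq_zero_iff_of_nonneg
    (fun m (_ : m ∈ Finset.univ) => norm_nonneg (Zm (C m) phis))).mp hsumzero m
    (Finset.mem_univ m)
  exact norm_eq_zero.mp this
end

section
/- If S ∈ {−1, 1}^N is an assignment satisfying all M clauses of the 3-SAT instance and φ*_j = π(1 − S_j)/2 for every variable j, then Z_m(φ*) = 0 for every clause m ∈ {1, …, M}, and consequently L_T(φ*, φ_λ) = 0 for every φ_λ ∈ ℝ^M. -/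
/-!
At `φ*_j = π(1 − S_j)/2` every phase factor `e^{iφ*_j}` equals `S_j ∈ {±1}`, which is its own
inverse. Hence each clause energy collapses to the product `∏_k (1 − σ_k S_{v_k})` over the
literals, `σ_k = ±1` being the sign of the `k`-th literal, and a true literal kills its factor.
-/

open Complex

def literalSign (t : Fin 4) (k : Fin 3) : ℝ :=
  if (k : ℕ) < (t : ℕ) then -1 else 1

lemma literalSign_mul_self (t : Fin 4) (k : Fin 3) : literalSign t k * literalSign t k = 1 := by
  unfold literalSign
  split_ifs <;> norm_num

lemma exp_I_mul_spin_phase {s : ℝ} (hs : s = 1 ∨ s = -1) :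
    exp (I * ((Real.pi * (1 - s) / 2 : ℝ) : ℂ)) = s := by
  rcases hs with rfl | rfl
  · simp
  · push_cast
    rw [show I * (Real.pi * (1 - -1) / 2) = Real.pi * I by ring, exp_pi_mul_I]

lemma ZclauseType_eq_prod (t : Fin 4) {x y z : ℝ} {a b c : ℂ}
    (ha : exp (I * x) = a) (hb : exp (I * y) = b) (hc : exp (I * z) = c)
    (hb2 : b * b = 1) (hc2 : c * c = 1) :
    ZclauseType t x y z =
      (1 - literalSign t 0 * a) * (1 - literalSign t 1 * b) * (1 - literalSign t 2 * c) := by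
  have hb' : b⁻¹ = b := inv_eq_of_mul_eq_one_right hb2
  have hc' : c⁻¹ = c := inv_eq_of_mul_eq_one_right hc2
  fin_cases t <;>
    simp only [ZclauseType, Fin.reduceFinMk, Matrix.cons_val, Zclause1, Zclause2, Zclause3,
      Zclause4,
      literalSign, mul_sub, mul_add, exp_sub, exp_add, ha, hb, hc, div_eq_mul_inv, hb', hc'] <;>
    norm_num <;> ring

lemma Zm_spin_phase_eq_prod {N : ℕ} (c : Clause3 N) {S : Fin N → ℝ}
    (hS : ∀ j, S j = 1 ∨ S j = -1) :
    Zm c (fun j => Real.pi * (1 - S j) / 2) =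
      ∏ k : Fin 3, (1 - literalSign c.negCount k * S (c.var k) : ℂ) := by
  have hsq : ∀ j, (S j : ℂ) * S j = 1 := fun j => by
    rcases hS j with h | h <;> simp [h]
  rw [Zm, ZclauseType_eq_prod _ (exp_I_mul_spin_phase (hS _)) (exp_I_mul_spin_phase (hS _))
    (exp_I_mul_spin_phase (hS _)) (hsq _) (hsq _), Fin.prod_univ_three]

lemma Zm_spin_phase_eq_zero {N : ℕ} {c : Clause3 N} {S : Fin N → ℝ}
    (hS : ∀ j, S j = 1 ∨ S j = -1) (hsat : ClauseSat c S) :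
    Zm c (fun j => Real.pi * (1 - S j) / 2) = 0 := by
  obtain ⟨k, hk⟩ := hsat
  rw [Zm_spin_phase_eq_prod c hS]
  refine Finset.prod_eq_zero (Finset.mem_univ k) ?_
  rw [show S (c.var k) = literalSign c.negCount k from hk]
  exact_mod_cast sub_eq_zero.mpr (literalSign_mul_self c.negCount k).symm

lemma LagT_eq_zero {N M : ℕ} {C : Fin M → Clause3 N} {phi : Fin N → ℝ}
    (h : ∀ m, Zm (C m) phi = 0) (lam : Fin M → ℝ) : LagT C phi lam = 0 := by
  simp [LagT, h]

/-- if S ∈ {−1,1}^N satisfies all clauses and φ*_j = π(1 − S_j)/2, then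
Z_m(φ*) = 0 for every clause m, and consequently L_T(φ*, φ_λ) = 0 for every φ_λ. -/
theorem satisfying_assignment_zero_energy (N M : ℕ) (C : Fin M → Clause3 N)
    (S : Fin N → ℝ) (hS : ∀ j, S j = 1 ∨ S j = -1)
    (hsat : ∀ m : Fin M, ClauseSat (C m) S) :
    (∀ m : Fin M, Zm (C m) (fun j => Real.pi * (1 - S j) / 2) = 0) ∧
      (∀ lam : Fin M → ℝ, LagT C (fun j => Real.pi * (1 - S j) / 2) lam = 0) := by
  have hZ : ∀ m, Zm (C m) (fun j => Real.pi * (1 - S j) / 2) = 0 :=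
    fun m => Zm_spin_phase_eq_zero hS (hsat m)
  exact ⟨hZ, LagT_eq_zero hZ⟩
end

section
/- If the 3-SAT instance is satisfiable, then inf_{φ ∈ ℝ^N} ∑_{m=1}^M |Z_m(φ)| = 0, and the infimum is attained at the binary phases φ*_j = π(1 − S_j)/2 of any satisfying assignment S; equivalently, min_{φ} max_{φ_λ} L_T(φ, φ_λ) = 0. -/

lemma exp_binary (s : ℝ) (hs : s = 1 ∨ s = -1) :
    Complex.exp (Complex.I * ((Real.pi * (1 - s) / 2 : ℝ) : ℂ)) = (s : ℂ) := by
  rcases hs with rfl | rfl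
  · norm_num
  · have h : ((Real.pi * (1 - (-1:ℝ)) / 2 : ℝ) : ℂ) = (Real.pi : ℂ) := by push_cast; ring
    rw [h, mul_comm, Complex.exp_pi_mul_I]; norm_num

lemma exp_diff (x y : ℝ) : Complex.exp (Complex.I * ((x:ℂ) - (y:ℂ))) =
    Complex.exp (Complex.I * (x:ℂ)) / Complex.exp (Complex.I * (y:ℂ)) := by
  rw [mul_sub, Complex.exp_sub]

lemma exp_diff3 (x y z : ℝ) : Complex.exp (Complex.I * ((x:ℂ) - (y:ℂ) + (z:ℂ))) =
    Complex.exp (Complex.I * (x:ℂ)) / Complex.exp (Complex.I * (y:ℂ))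
      * Complex.exp (Complex.I * (z:ℂ)) := by
  rw [mul_add, mul_sub, Complex.exp_add, Complex.exp_sub]

lemma Zt_zero (t : Fin 4) (a b c : ℝ) (ha : a = 1 ∨ a = -1) (hb : b = 1 ∨ b = -1)
    (hc : c = 1 ∨ c = -1)
    (h : a = (if 0 < (t:ℕ) then (-1:ℝ) else 1) ∨ b = (if 1 < (t:ℕ) then (-1:ℝ) else 1) ∨
         c = (if 2 < (t:ℕ) then (-1:ℝ) else 1)) :
    ZclauseType t (Real.pi*(1-a)/2) (Real.pi*(1-b)/2) (Real.pi*(1-c)/2) = 0 := by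
  have ea := exp_binary a ha
  have eb := exp_binary b hb
  have ec := exp_binary c hc
  fin_cases t
  · show Zclause1 _ _ _ = 0
    norm_num at h
    rw [Zclause1, exp_diff, exp_diff, exp_diff, exp_diff3, ea, eb, ec]
    rcases ha with rfl|rfl <;> rcases hb with rfl|rfl <;> rcases hc with rfl|rfl <;>
      norm_num at h <;> norm_num
  · show Zclause2 _ _ _ = 0
    norm_num at h
    rw [Zclause2, exp_diff, exp_diff, exp_diff, exp_diff3, ea, eb, ec]
    rcases ha with rfl|rfl <;> rcases hb with rfl|rfl <;> rcases hc with rfl|rfl <;>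
      norm_num at h <;> norm_num
  · show Zclause3 _ _ _ = 0
    norm_num at h
    rw [Zclause3, exp_diff, exp_diff, exp_diff, exp_diff3, ea, eb, ec]
    rcases ha with rfl|rfl <;> rcases hb with rfl|rfl <;> rcases hc with rfl|rfl <;>
      norm_num at h <;> norm_num
  · show Zclause4 _ _ _ = 0
    norm_num at h
    rw [Zclause4, exp_diff, exp_diff, exp_diff, exp_diff3, ea, eb, ec]
    rcases ha with rfl|rfl <;> rcases hb with rfl|rfl <;> rcases hc with rfl|rfl <;>
      norm_num at h <;> norm_num

lemma Zm_zero {N : ℕ} (c : Clause3 N) (S : Fin N → ℝ) (hS : ∀ j, S j = 1 ∨ S j = -1)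
    (hsat : ClauseSat c S) : Zm c (fun j => Real.pi * (1 - S j) / 2) = 0 := by
  obtain ⟨k, hk⟩ := hsat
  have h : S (c.var 0) = (if 0 < (c.negCount:ℕ) then (-1:ℝ) else 1) ∨
      S (c.var 1) = (if 1 < (c.negCount:ℕ) then (-1:ℝ) else 1) ∨
      S (c.var 2) = (if 2 < (c.negCount:ℕ) then (-1:ℝ) else 1) := by
    fin_cases k
    · exact Or.inl hk
    · exact Or.inr (Or.inl hk)
    · exact Or.inr (Or.inr hk)
  exact Zt_zero c.negCount _ _ _ (hS _) (hS _) (hS _) h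

lemma sup_term (z : ℂ) :
    Real.cos (Complex.arg z) * z.re + Real.sin (Complex.arg z) * z.im = ‖z‖ := by
  by_cases hz : z = 0
  · simp [hz]
  · have habs : ‖z‖ ≠ 0 := by simpa using hz
    rw [Complex.cos_arg hz, Complex.sin_arg]
    field_simp
    have h2 := Complex.sq_norm z
    rw [Complex.normSq_apply] at h2
    nlinarith [h2]

lemma term_le (t : ℝ) (z : ℂ) :
    Real.cos t * z.re + Real.sin t * z.im ≤ ‖z‖ := by
  have h : ‖z‖ = Real.sqrt (z.re^2 + z.im^2) := by
    rw [Complex.norm_def, Complex.normSq_apply]; ring_nf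
  rw [h]
  set r := Real.sqrt (z.re^2 + z.im^2) with hr
  have hr0 : 0 ≤ r := Real.sqrt_nonneg _
  have hr2 : r^2 = z.re^2 + z.im^2 := Real.sq_sqrt (by positivity)
  rcases eq_or_lt_of_le hr0 with h0 | h0
  · have hz : z.re = 0 ∧ z.im = 0 := by constructor <;> nlinarith
    rw [hz.1, hz.2]; simp [← h0]
  · nlinarith [sq_nonneg (z.re - r * Real.cos t), sq_nonneg (z.im - r * Real.sin t),
      Real.sin_sq_add_cos_sq t]

/-- if the instance is satisfiable, then inf_φ ∑_m |Z_m(φ)| = 0, the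
infimum being attained at the binary phases φ*_j = π(1 − S_j)/2 of any satisfying
assignment S; equivalently min_φ max_{φ_λ} L_T(φ, φ_λ) = 0. -/
theorem LagT_min_max_eq_zero (N M : ℕ) (C : Fin M → Clause3 N)
    (hsat : Satisfiable C) :
    sInf {y : ℝ | ∃ phi : Fin N → ℝ, y = ∑ m : Fin M, ‖Zm (C m) phi‖} = 0 ∧
      (∀ S : Fin N → ℝ, (∀ j, S j = 1 ∨ S j = -1) → (∀ m : Fin M, ClauseSat (C m) S) →
        ∑ m : Fin M, ‖Zm (C m) (fun j => Real.pi * (1 - S j) / 2)‖ = 0) ∧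
      sInf {y : ℝ | ∃ phi : Fin N → ℝ,
        y = sSup {z : ℝ | ∃ lam : Fin M → ℝ, z = LagT C phi lam}} = 0 := by
  obtain ⟨S, hS, hAll⟩ := hsat
  have part2 : ∀ S : Fin N → ℝ, (∀ j, S j = 1 ∨ S j = -1) → (∀ m : Fin M, ClauseSat (C m) S) →
      ∑ m : Fin M, ‖Zm (C m) (fun j => Real.pi * (1 - S j) / 2)‖ = 0 := by
    intro S hS hAll
    refine Finset.sum_eq_zero fun m _ => ?_
    rw [Zm_zero (C m) S hS (hAll m)]
    simp
  have h0mem : (0:ℝ) ∈ {y : ℝ | ∃ phi : Fin N → ℝ,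
      y = ∑ m : Fin M, ‖Zm (C m) phi‖} :=
    ⟨fun j => Real.pi * (1 - S j) / 2, (part2 S hS hAll).symm⟩
  have hlb : ∀ y ∈ {y : ℝ | ∃ phi : Fin N → ℝ,
      y = ∑ m : Fin M, ‖Zm (C m) phi‖}, (0:ℝ) ≤ y := by
    rintro y ⟨phi, rfl⟩
    exact Finset.sum_nonneg fun m _ => norm_nonneg _
  have part1 : sInf {y : ℝ | ∃ phi : Fin N → ℝ,
      y = ∑ m : Fin M, ‖Zm (C m) phi‖} = 0 :=
    le_antisymm (csInf_le ⟨0, hlb⟩ h0mem) (le_csInf ⟨0, h0mem⟩ hlb)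
  have hsup : ∀ phi : Fin N → ℝ, sSup {z : ℝ | ∃ lam : Fin M → ℝ, z = LagT C phi lam} =
      ∑ m : Fin M, ‖Zm (C m) phi‖ := by
    intro phi
    apply IsGreatest.csSup_eq
    constructor
    · exact ⟨fun m => Complex.arg (Zm (C m) phi),
        (Finset.sum_congr rfl fun m _ => sup_term _).symm⟩
    · rintro z ⟨lam, rfl⟩
      exact Finset.sum_le_sum fun m _ => term_le _ _
  have hseteq : {y : ℝ | ∃ phi : Fin N → ℝ,
        y = sSup {z : ℝ | ∃ lam : Fin M → ℝ, z = LagT C phi lam}} =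
      {y : ℝ | ∃ phi : Fin N → ℝ, y = ∑ m : Fin M, ‖Zm (C m) phi‖} := by
    ext y
    constructor
    · rintro ⟨phi, rfl⟩; exact ⟨phi, (hsup phi).symm ▸ rfl⟩
    · rintro ⟨phi, rfl⟩; exact ⟨phi, (hsup phi).symm⟩
  refine ⟨part1, part2, ?_⟩
  rw [hseteq, part1]
end

section
/- If the 3-SAT instance is satisfiable, then the dual function is nonpositive: for every φ_λ ∈ ℝ^M, inf_{φ ∈ ℝ^N} L_T(φ, φ_λ) ≤ 0. -/
/-! On the phases `0` and `π` every `e^{iφ}` is a sign `±1`, and there each clause energy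
factors as `∏ₖ (1 - ℓₖ e^{iφₖ})`, where `ℓₖ` is the sign that makes the `k`-th literal true.
A satisfying assignment, read as phases, therefore kills one factor of every clause energy,
so `L_T` vanishes there and the infimum is at most `0`. -/

open Complex

def literalTrueValue (t : Fin 4) (k : Fin 3) : ℝ :=
  if (k : ℕ) < (t : ℕ) then -1 else 1

theorem ZclauseType_eq_prod_s12 (t : Fin 4) (θ : Fin 3 → ℝ)
    (h₁ : exp (I * θ 1) ^ 2 = 1) (h₂ : exp (I * θ 2) ^ 2 = 1) :
    ZclauseType t (θ 0) (θ 1) (θ 2) =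
      ∏ k : Fin 3, (1 - literalTrueValue t k * exp (I * θ k)) := by
  have inv_eq {z : ℂ} (hz : z ^ 2 = 1) : z⁻¹ = z :=
    inv_eq_of_mul_eq_one_right (by rw [← sq, hz])
  have exp_sub (a b : ℝ) : exp (I * ((a : ℂ) - b)) = exp (I * a) * (exp (I * b))⁻¹ := by
    rw [mul_sub, Complex.exp_sub, div_eq_mul_inv]
  have exp_sub_add (a b c : ℝ) :
      exp (I * ((a : ℂ) - b + c)) = exp (I * a) * (exp (I * b))⁻¹ * exp (I * c) := by
    rw [mul_add, Complex.exp_add, exp_sub]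
  fin_cases t <;>
    simp only [ZclauseType, Fin.reduceFinMk, Matrix.cons_val, Zclause1, Zclause2, Zclause3,
      Zclause4, Fin.prod_univ_three, literalTrueValue, exp_sub, exp_sub_add, inv_eq h₁,
      inv_eq h₂] <;>
    norm_num <;> ring

noncomputable def signPhase (s : ℝ) : ℝ :=
  if s = 1 then 0 else Real.pi

theorem exp_signPhase {s : ℝ} (hs : s = 1 ∨ s = -1) : exp (I * signPhase s) = s := by
  rcases hs with rfl | rfl
  · simp [signPhase]
  · norm_num [signPhase, mul_comm I, exp_pi_mul_I]

theorem Zm_signPhase_eq_zero {N : ℕ} (c : Clause3 N) {S : Fin N → ℝ}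
    (hS : ∀ j, S j = 1 ∨ S j = -1) (hc : ClauseSat c S) :
    Zm c (fun j => signPhase (S j)) = 0 := by
  have hexp (j : Fin N) : exp (I * signPhase (S j)) = S j := exp_signPhase (hS j)
  have hsq (j : Fin N) : exp (I * signPhase (S j)) ^ 2 = 1 := by
    rw [hexp]
    rcases hS j with h | h <;> simp [h]
  obtain ⟨k, hk⟩ := hc
  rw [Zm, ZclauseType_eq_prod_s12 _ (fun k => signPhase (S (c.var k))) (hsq _) (hsq _)]
  refine Finset.prod_eq_zero (Finset.mem_univ k) ?_
  rw [hexp, hk, ← ofReal_mul, literalTrueValue]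
  split_ifs <;> norm_num

theorem LagT_eq_zero_of_Zm_eq_zero {N M : ℕ} (C : Fin M → Clause3 N) {phi : Fin N → ℝ}
    (h : ∀ m, Zm (C m) phi = 0) (lam : Fin M → ℝ) : LagT C phi lam = 0 :=
  Finset.sum_eq_zero fun m _ => by simp [h m]

/-- if the instance is satisfiable, the dual function is nonpositive:
for every φ_λ, inf_φ L_T(φ, φ_λ) ≤ 0. -/
theorem LagT_dual_function_nonpos (N M : ℕ) (C : Fin M → Clause3 N)
    (hsat : Satisfiable C) :
    ∀ lam : Fin M → ℝ,
      sInf {y : ℝ | ∃ phi : Fin N → ℝ, y = LagT C phi lam} ≤ 0 := by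
  intro lam
  obtain ⟨S, hS, hCS⟩ := hsat
  have hzero : LagT C (fun j => signPhase (S j)) lam = 0 :=
    LagT_eq_zero_of_Zm_eq_zero C (fun m => Zm_signPhase_eq_zero (C m) hS (hCS m)) lam
  exact Real.sInf_nonpos' ⟨0, ⟨_, hzero.symm⟩, le_rfl⟩
end
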